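/- Let m ≥ 2 and s ≤ m − 1, and let v : Fin m → (Fin s → ℕ) be a family of m natural-number vectors of length s. Suppose there is a coordinate l₀ : Fin s at which v 0 strictly dominates all other vectors, i.e., v i l₀ < v 0 l₀ for every i ≠ 0. Then there exists an index k ≠ 0 such that for every coordinate l : Fin s, v k l ≤ max over i ≠ k of v i l. -/
import Mathlib


/-- Refined pigeonhole step of Lemma 2 (integer-valued star-graph lower bound):
if `s ≤ m - 1` and the vector `v 0` strictly dominates all other vectors at some
coordinate `l₀`, then some vector `v k` with `k ≠ 0` is dominated, coordinate-wise,
by the pointwise maximum of the other `m - 1` vectors. -/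
theorem dominated_vector_exists_ne_zero (m s : ℕ) (hm : 2 ≤ m) (hs : s ≤ m - 1)
    (v : Fin m → (Fin s → ℕ)) (l₀ : Fin s)
    (hdom : ∀ i : Fin m, i ≠ ⟨0, by omega⟩ → v i l₀ < v ⟨0, by omega⟩ l₀) :
    ∃ k : Fin m, k ≠ ⟨0, by omega⟩ ∧ ∀ l : Fin s,
      v k l ≤ (Finset.univ.erase k).sup'
        (by
          rw [Finset.erase_nonempty (Finset.mem_univ k),
            ← Finset.one_lt_card_iff_nontrivial, Finset.card_univ, Fintype.card_fin]
          omega)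
        (fun i => v i l) := by
  have hmax : ∀ l : Fin s, ∃ i : Fin m, ∀ j, v j l ≤ v i l := by
    intro l
    have : Nonempty (Fin m) := ⟨⟨0, by omega⟩⟩
    obtain ⟨i, hi⟩ := Finite.exists_max (fun j : Fin m => v j l)
    exact ⟨i, hi⟩
  choose f hf using hmax
  set z : Fin m := ⟨0, by omega⟩ with hz
  have hf0 : f l₀ = z := by
    by_contra h
    have h1 := hdom (f l₀) h
    have h2 := hf l₀ z
    omega
  set S : Finset (Fin m) := Finset.image f Finset.univ with hS
  have hzS : z ∈ S := hf0 ▸ Finset.mem_image_of_mem f (Finset.mem_univ l₀)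
  have hcard : S.card < m := by
    have h1 : S.card ≤ s := (Finset.card_image_le).trans (by simp)
    omega
  have : ∃ k : Fin m, k ∉ S := by
    by_contra h
    push_neg at h
    have : Finset.univ ⊆ S := fun x _ => h x
    have := Finset.card_le_card this
    simp [Finset.card_univ] at this
    omega
  obtain ⟨k, hk⟩ := this
  refine ⟨k, fun h => hk (h ▸ hzS), fun l => ?_⟩
  have hfl : f l ∈ S := Finset.mem_image_of_mem f (Finset.mem_univ l)
  have hne : f l ≠ k := fun h => hk (h ▸ hfl)
  exact (hf l k).trans (Finset.le_sup' (fun i => v i l)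
    (Finset.mem_erase.mpr ⟨hne, Finset.mem_univ _⟩))
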